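/- arXiv:2208.09817 — 4 statements merged into one kernel-verified Lean document; each statement's English description precedes it below -/
import Mathlib

section
/- The convolution-smoothed check loss ℓ_{h,τ}(u) = ∫_{-∞}^{∞} ρ_τ(v) K_h(u - v) dv is convex, continuously differentiable, and its derivative satisfies ℓ'_{h,τ}(u) = K̄(u/h) - (1 - τ), where K̄(t) = ∫_{-∞}^{t} K(s) ds. -/
/-!
After the substitution `v = u - t`, `ℓ` is the convolution of the Lipschitz function `ρ_τ` with
the integrable density `K_h`, so it can be differentiated under the integral sign. Since
`ρ_τ' = τ - 1{· < 0}` away from the origin, `ℓ'(u) = τ - ∫_{t > u} K_h = ∫_{t ≤ u} K_h - (1 - τ)`,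
which is `K̄(u/h) - (1 - τ)` after rescaling. This is continuous in `u`, and nondecreasing
because `K ≥ 0`, so `ℓ` is `C¹` and convex.
-/

open MeasureTheory Set

/-- The quantile check loss ρ_τ(u) = (τ - 1{u<0})·u. -/
noncomputable def checkLoss (τ : ℝ) (u : ℝ) : ℝ := (τ - if u < 0 then 1 else 0) * u

lemma checkLoss_eq_mul_sub_min (τ u : ℝ) : checkLoss τ u = τ * u - min u 0 := by
  unfold checkLoss
  split_ifs with hu
  · rw [min_eq_left hu.le]; ring
  · rw [min_eq_right (not_lt.1 hu)]; ring

lemma checkLoss_lipschitzWith (τ : ℝ) : LipschitzWith (‖τ‖₊ + 1) (checkLoss τ) := by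
  have h := (lipschitzWith_smul τ).sub (LipschitzWith.id.min_const (0 : ℝ))
  simpa [funext (checkLoss_eq_mul_sub_min τ)] using h

lemma hasDerivAt_checkLoss (τ : ℝ) {u : ℝ} (hu : u ≠ 0) :
    HasDerivAt (checkLoss τ) (τ - if u < 0 then 1 else 0) u := by
  have hsign : ∀ᶠ x in nhds u, (x < 0 ↔ u < 0) := by
    rcases hu.lt_or_gt with hneg | hpos
    · filter_upwards [Iio_mem_nhds hneg] with x hx using iff_of_true hx hneg
    · filter_upwards [Ioi_mem_nhds hpos] with x hx using
        iff_of_false (not_lt.2 hx.le) (not_lt.2 hpos.le)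
  refine ((hasDerivAt_id u).const_mul _).congr_of_eventuallyEq ?_ |>.congr_deriv (mul_one _)
  filter_upwards [hsign] with x hx
  simp only [checkLoss, hx, id]

theorem hasDerivAt_integral_comp_sub_mul {f f' g : ℝ → ℝ} {C : NNReal} {x : ℝ}
    (hf : LipschitzWith C f) (hf' : ∀ᵐ y, HasDerivAt f (f' y) y) (hf'_meas : Measurable f')
    (hg : Integrable g) (hfg : Integrable fun t => f (x - t) * g t) :
    HasDerivAt (fun y => ∫ t, f (y - t) * g t) (∫ t, f' (x - t) * g t) x := by
  have hshift : ∀ᵐ t, HasDerivAt f (f' (x - t)) (x - t) :=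
    (Measure.measurePreserving_sub_left volume x).quasiMeasurePreserving.ae hf'
  refine (hasDerivAt_integral_of_dominated_loc_of_lip (bound := fun t => C * ‖g t‖)
    Filter.univ_mem ?_ hfg ?_ ?_ (hg.norm.const_mul _) ?_).2
  · exact .of_forall fun y =>
      (hf.continuous.comp (continuous_sub_left y)).aestronglyMeasurable.mul hg.1
  · exact (hf'_meas.comp (measurable_const_sub x)).aestronglyMeasurable.mul hg.1
  · refine .of_forall fun t => (LipschitzWith.of_dist_le_mul fun a b => ?_).lipschitzOnWith
    calc dist (f (a - t) * g t) (f (b - t) * g t) = dist (f (a - t)) (f (b - t)) * ‖g t‖ := by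
          rw [Real.dist_eq, Real.dist_eq, ← sub_mul, abs_mul, Real.norm_eq_abs]
      _ ≤ C * dist (a - t) (b - t) * ‖g t‖ := by gcongr; exact hf.dist_le_mul _ _
      _ = Real.nnabs (C * ‖g t‖) * dist a b := by
          rw [dist_sub_right, Real.coe_nnabs, abs_of_nonneg (by positivity)]; ring
  · filter_upwards [hshift] with t ht
    exact (ht.comp x ((hasDerivAt_id x).sub_const t)).mul_const (g t) |>.congr_deriv (by simp)

theorem integral_comp_div_Iic {E : Type*} [NormedAddCommGroup E] [NormedSpace ℝ E]
    (g : ℝ → E) (a : ℝ) {b : ℝ} (hb : 0 < b) :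
    ∫ x in Iic a, g (x / b) = b • ∫ x in Iic (a / b), g x := by
  have h := Measure.integral_comp_div ((Iic (a / b)).indicator g) b
  rw [abs_of_pos hb, integral_indicator measurableSet_Iic] at h
  rw [← h, ← integral_indicator measurableSet_Iic]
  congr 1
  ext x
  simp [indicator, div_le_div_iff_of_pos_right hb]

theorem MeasureTheory.Integrable.continuous_integral_Iic {E : Type*} [NormedAddCommGroup E]
    [NormedSpace ℝ E] {μ : Measure ℝ} [NullSingletonClass μ] {f : ℝ → E}
    (hf : Integrable f μ) : Continuous fun a => ∫ x in Iic a, f x ∂μ :=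
  continuous_iff_continuousAt.2 fun a =>
    hf.integrableOn.continuousOn_Iic_primitive_Iic.continuousAt (Iic_mem_nhds (lt_add_one a))

theorem monotone_integral_Iic {μ : Measure ℝ} {f : ℝ → ℝ} (hf : Integrable f μ)
    (hf_nonneg : ∀ x, 0 ≤ f x) : Monotone fun a => ∫ x in Iic a, f x ∂μ :=
  fun _ _ hab => setIntegral_mono_set hf.integrableOn (.of_forall hf_nonneg)
    (Iic_subset_Iic.2 hab).eventuallyLE

theorem integral_sub_ite_lt_mul {μ : Measure ℝ} {c : ℝ → ℝ} (hc : Integrable c μ) (τ x : ℝ) :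
    ∫ t, (τ - if x - t < 0 then 1 else 0) * c t ∂μ
      = (∫ t in Iic x, c t ∂μ) - (1 - τ) * ∫ t, c t ∂μ := by
  have hpt : ∀ t, (τ - if x - t < 0 then 1 else 0) * c t = τ * c t - (Ioi x).indicator c t := by
    intro t
    by_cases ht : x < t
    · simp only [sub_neg.2 ht, ↓reduceIte, mem_Ioi, ht, indicator_of_mem]; ring
    · simp [ht, not_lt.2 (sub_nonneg.2 (not_lt.1 ht))]
  simp_rw [hpt]
  rw [integral_sub (hc.const_mul τ) (hc.indicator measurableSet_Ioi), integral_const_mul,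
    integral_indicator measurableSet_Ioi,
    ← intervalIntegral.integral_Iic_add_Ioi hc.integrableOn hc.integrableOn]
  ring

theorem hasDerivAt_integral_checkLoss_comp_sub_mul {c : ℝ → ℝ} (hc : Integrable c)
    (hc_one : ∫ t, c t = 1) (τ : ℝ) {u : ℝ}
    (hint : Integrable fun t => checkLoss τ (u - t) * c t) :
    HasDerivAt (fun x => ∫ t, checkLoss τ (x - t) * c t) ((∫ t in Iic u, c t) - (1 - τ)) u := by
  have hae : ∀ᵐ y, HasDerivAt (checkLoss τ) (τ - if y < 0 then 1 else 0) y := by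
    filter_upwards [Measure.ae_ne volume 0] with y hy using hasDerivAt_checkLoss τ hy
  convert hasDerivAt_integral_comp_sub_mul (checkLoss_lipschitzWith τ) hae
    (measurable_const.sub (Measurable.ite measurableSet_Iio measurable_const measurable_const))
    hc hint using 1
  rw [integral_sub_ite_lt_mul hc, hc_one, mul_one]

theorem smoothed_check_loss_deriv_general
    (τ h : ℝ) (hh : 0 < h)
    (K : ℝ → ℝ) (hKnonneg : ∀ u, 0 ≤ K u)
    (hKint : (∫ u, K u) = 1)
    (ℓ : ℝ → ℝ)
    (hℓ : ∀ u, ℓ u = ∫ v, checkLoss τ v * (K ((u - v) / h) / h))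
    (hint : ∀ u, Integrable (fun v => checkLoss τ v * (K ((u - v) / h) / h))) :
    ConvexOn ℝ Set.univ ℓ ∧
    Continuous (deriv ℓ) ∧
    (∀ u, HasDerivAt ℓ ((∫ s in Set.Iic (u / h), K s) - (1 - τ)) u) := by
  have hK : Integrable K := Integrable.of_integral_ne_zero (by simp [hKint])
  set Kh : ℝ → ℝ := fun t => K (t / h) / h
  have hKh : Integrable Kh := (hK.comp_div hh.ne').div_const h
  have hKh_one : ∫ t, Kh t = 1 := by
    rw [integral_div, Measure.integral_comp_div K h, hKint, abs_of_pos hh, smul_eq_mul, mul_one,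
      div_self hh.ne']
  have hℓ_conv : ℓ = fun u => ∫ t, checkLoss τ (u - t) * Kh t := by
    ext u
    rw [hℓ, ← integral_sub_left_eq_self _ volume u]
    simp only [Kh, sub_sub_cancel]
  have hderiv (u : ℝ) : HasDerivAt ℓ ((∫ s in Set.Iic (u / h), K s) - (1 - τ)) u := by
    have hint' : Integrable fun t => checkLoss τ (u - t) * Kh t := by
      simpa only [sub_sub_cancel] using (hint u).comp_sub_left u
    have hconv := hasDerivAt_integral_checkLoss_comp_sub_mul hKh hKh_one τ hint'
    rwa [← hℓ_conv, integral_div, integral_comp_div_Iic K u hh, smul_eq_mul,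
      mul_div_cancel_left₀ _ hh.ne'] at hconv
  have hderiv_eq : deriv ℓ = fun u => (∫ s in Set.Iic (u / h), K s) - (1 - τ) :=
    funext fun u => (hderiv u).deriv
  refine ⟨Monotone.convexOn_univ_of_deriv (fun u => (hderiv u).differentiableAt) ?_, ?_, hderiv⟩
  · rw [hderiv_eq]
    exact fun a b hab => sub_le_sub_right
      (monotone_integral_Iic hK hKnonneg (div_le_div_of_nonneg_right hab hh.le)) _
  · rw [hderiv_eq]
    exact (hK.continuous_integral_Iic.comp (continuous_id.div_const h)).sub continuous_const

/-- the convolution-smoothed check loss is convex, continuously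
differentiable, with derivative ℓ'_{h,τ}(u) = K̄(u/h) - (1 - τ). -/
theorem smoothed_check_loss_deriv
    (τ h : ℝ) (hτ : τ ∈ Set.Ioo (0:ℝ) 1) (hh : 0 < h)
    (K : ℝ → ℝ) (hKcont : Continuous K) (hKnonneg : ∀ u, 0 ≤ K u)
    (hKint : (∫ u, K u) = 1)
    (ℓ : ℝ → ℝ)
    (hℓ : ∀ u, ℓ u = ∫ v, checkLoss τ v * (K ((u - v) / h) / h))
    (hint : ∀ u, Integrable (fun v => checkLoss τ v * (K ((u - v) / h) / h))) :
    ConvexOn ℝ Set.univ ℓ ∧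
    Continuous (deriv ℓ) ∧
    (∀ u, HasDerivAt ℓ ((∫ s in Set.Iic (u / h), K s) - (1 - τ)) u) :=
  smoothed_check_loss_deriv_general τ h hh K hKnonneg hKint ℓ hℓ hint
end

section
/- The first derivative of the population smoothed quantile loss at the true quantile satisfies |m'_{h,k}(F^{-1}(τ_k))| ≤ (l₀ κ₂ / 2) h², where m'_{h,k}(b) = ∫ K(u) F(b - hu) du - τ_k. -/
/-!
By the symmetry of `K`, `∫ K(u) F(q - hu) du` is also the `K`-average of
`(F(q + hu) + F(q - hu)) / 2`, so, as `∫ K = 1` and `F q = τ`, the bias is half the `K`-average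
of the second symmetric difference `F(q + a) + F(q - a) - 2 F(q)` at `a = hu`. That difference
equals `∫₀ᵃ (f(q + t) - f(q - t)) dt`, which the Lipschitz bound on `f` controls by
`∫₀ᵃ 2 l₀ t dt = l₀ a²`; averaging `l₀ h² u²` against `K` gives `l₀ h² κ₂`.
-/

open MeasureTheory Set

theorem continuous_of_abs_sub_le_mul_abs_sub {f : ℝ → ℝ} {L : ℝ}
    (hf : ∀ u v, |f u - f v| ≤ L * |u - v|) : Continuous f :=
  (LipschitzWith.of_dist_le' fun u v => by simpa only [Real.dist_eq] using hf u v).continuous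

theorem LocallyIntegrable.integrableOn_Iic_of_integrableOn_Iic {X E : Type*} [LinearOrder X]
    [TopologicalSpace X] [CompactIccSpace X] [MeasurableSpace X] [NormedAddCommGroup E]
    {μ : Measure X} {f : X → E} (hf : LocallyIntegrable f μ) {a : X}
    (ha : IntegrableOn f (Iic a) μ) (b : X) : IntegrableOn f (Iic b) μ :=
  integrableOn_Iic_iff_integrableAtFilter_atBot.2
    ⟨(integrableOn_Iic_iff_integrableAtFilter_atBot.1 ha).1, hf.locallyIntegrableOn _⟩

theorem abs_integral_sub_integral_symm_le {f : ℝ → ℝ} {L : ℝ}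
    (hf : ∀ u v, |f u - f v| ≤ L * |u - v|) (x a : ℝ) :
    |(∫ t in x..x + a, f t) - ∫ t in x - a..x, f t| ≤ L * a ^ 2 := by
  wlog ha : 0 ≤ a generalizing a
  · have h := this (-a) (by linarith)
    rwa [sub_neg_eq_add, ← sub_eq_add_neg, intervalIntegral.integral_symm (x - a) x,
      intervalIntegral.integral_symm x (x + a), neg_sub_neg, neg_sq] at h
  have hfc := continuous_of_abs_sub_le_mul_abs_sub hf
  have hdiff : (∫ t in x..x + a, f t) - ∫ t in x - a..x, f t
      = ∫ t in (0 : ℝ)..a, (f (x + t) - f (x - t)) := by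
    rw [intervalIntegral.integral_sub (Continuous.intervalIntegrable (by fun_prop) _ _)
      (Continuous.intervalIntegrable (by fun_prop) _ _),
      intervalIntegral.integral_comp_add_left, intervalIntegral.integral_comp_sub_left,
      add_zero, sub_zero]
  calc |(∫ t in x..x + a, f t) - ∫ t in x - a..x, f t|
      ≤ ∫ t in (0 : ℝ)..a, 2 * L * t := by
        rw [hdiff, ← Real.norm_eq_abs]
        refine intervalIntegral.norm_integral_le_of_norm_le ha
          (.of_forall fun t ht => ?_) (Continuous.intervalIntegrable (by fun_prop) _ _)
        calc ‖f (x + t) - f (x - t)‖ ≤ L * |x + t - (x - t)| := hf _ _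
          _ = 2 * L * t := by
            rw [show x + t - (x - t) = 2 * t by ring, abs_of_nonneg (by linarith [ht.1])]
            ring
    _ = L * a ^ 2 := by
        rw [intervalIntegral.integral_const_mul, integral_id]
        ring

theorem abs_add_sub_two_mul_le_of_eq_integral_Iic {f F : ℝ → ℝ} {L : ℝ}
    (hF : ∀ x, F x = ∫ t in Iic x, f t) (hf : ∀ u v, |f u - f v| ≤ L * |u - v|) (x a : ℝ) :
    |F (x + a) + F (x - a) - 2 * F x| ≤ L * a ^ 2 := by
  by_cases hint : ∃ x₀, IntegrableOn f (Iic x₀)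
  · obtain ⟨x₀, hx₀⟩ := hint
    have hIic := LocallyIntegrable.integrableOn_Iic_of_integrableOn_Iic
      (continuous_of_abs_sub_le_mul_abs_sub hf).locallyIntegrable hx₀
    have hsplit : F (x + a) + F (x - a) - 2 * F x
        = (∫ t in x..x + a, f t) - ∫ t in x - a..x, f t := by
      rw [← intervalIntegral.integral_Iic_sub_Iic (hIic _) (hIic _),
        ← intervalIntegral.integral_Iic_sub_Iic (hIic _) (hIic _), hF, hF, hF]
      ring
    rw [hsplit]
    exact abs_integral_sub_integral_symm_le hf x a
  · -- `F` is then the junk value `0` everywhere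
    simp only [not_exists] at hint
    have hL : 0 ≤ L := (abs_nonneg _).trans (by simpa using hf 1 0)
    simp only [hF, integral_undef (hint _), add_zero, mul_zero, sub_zero, abs_zero]
    positivity

theorem integral_mul_sub_eq_half_integral_symmetrize {K G : ℝ → ℝ}
    (hK : ∀ u, K (-u) = K u) (hK1 : ∫ u, K u = 1) (hKG : Integrable fun u => K u * G u)
    (c : ℝ) :
    (∫ u, K u * G u) - c = 1 / 2 * ∫ u, K u * (G (-u) + G u - 2 * c) := by
  have hKi : Integrable K := by
    by_contra h
    simp [integral_undef h] at hK1
  have hKG' : Integrable fun u => K u * G (-u) := by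
    simpa only [hK, neg_neg] using hKG.comp_neg
  have hrefl : ∫ u, K u * G (-u) = ∫ u, K u * G u := by
    rw [← integral_neg_eq_self]
    simp only [hK, neg_neg]
  have hsplit : ∫ u, K u * (G (-u) + G u - 2 * c)
      = (∫ u, K u * G (-u)) + (∫ u, K u * G u) - 2 * c := by
    simp only [mul_sub, mul_add]
    rw [integral_sub (f := fun u => K u * G (-u) + K u * G u) (hKG'.add hKG)
      (hKi.mul_const _), integral_add hKG' hKG, integral_mul_const, hK1, one_mul]
  rw [hsplit, hrefl]
  ring

theorem abs_integral_mul_le_of_abs_le_mul_sq {K D : ℝ → ℝ} {C : ℝ} (hK : ∀ u, 0 ≤ K u)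
    (hK2 : Integrable fun u => u ^ 2 * K u) (hD : ∀ u, |D u| ≤ C * u ^ 2) :
    |∫ u, K u * D u| ≤ C * ∫ u, u ^ 2 * K u := by
  rw [← integral_const_mul, ← Real.norm_eq_abs]
  refine norm_integral_le_of_norm_le (hK2.const_mul C) (.of_forall fun u => ?_)
  rw [Real.norm_eq_abs, abs_mul, abs_of_nonneg (hK u)]
  calc K u * |D u| ≤ K u * (C * u ^ 2) := mul_le_mul_of_nonneg_left (hD u) (hK u)
    _ = C * (u ^ 2 * K u) := by ring

theorem smoothed_loss_first_deriv_bias_general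
    (τk h l₀ κ₂ qτ : ℝ)
    (K f F : ℝ → ℝ)
    (hKsymm : ∀ u, K (-u) = K u) (hKnonneg : ∀ u, 0 ≤ K u)
    (hKint : (∫ u, K u) = 1)
    (hκ₂ : κ₂ = ∫ u, u ^ 2 * K u)
    (hκ₂fin : Integrable (fun u => u ^ 2 * K u))
    (hF : ∀ x, F x = ∫ t in Set.Iic x, f t)
    (hfLip : ∀ u v, |f u - f v| ≤ l₀ * |u - v|)
    (hq : F qτ = τk)
    (hint : Integrable (fun u => K u * F (qτ - h * u))) :
    |(∫ u, K u * F (qτ - h * u)) - τk| ≤ l₀ * κ₂ / 2 * h ^ 2 := by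
  have hsecond :
      |∫ u, K u * (F (qτ - h * -u) + F (qτ - h * u) - 2 * τk)| ≤ l₀ * h ^ 2 * κ₂ := by
    rw [hκ₂, ← hq]
    refine abs_integral_mul_le_of_abs_le_mul_sq hKnonneg hκ₂fin fun u => ?_
    rw [mul_neg, sub_neg_eq_add]
    exact (abs_add_sub_two_mul_le_of_eq_integral_Iic hF hfLip qτ (h * u)).trans_eq (by ring)
  rw [integral_mul_sub_eq_half_integral_symmetrize hKsymm hKint hint τk, abs_mul,
    abs_of_pos one_half_pos]
  linarith

/-- |m'_{h,k}(F⁻¹(τ_k))| ≤ (l₀ κ₂ / 2) h², where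
m'_{h,k}(b) = ∫ K(u) F(b - hu) du - τ_k. -/
theorem smoothed_loss_first_deriv_bias
    (τk h l₀ κ₂ qτ : ℝ) (hτ : τk ∈ Set.Ioo (0:ℝ) 1) (hh : 0 < h)
    (K f F : ℝ → ℝ)
    (hKsymm : ∀ u, K (-u) = K u) (hKnonneg : ∀ u, 0 ≤ K u)
    (hKint : (∫ u, K u) = 1)
    (hκ₂ : κ₂ = ∫ u, u ^ 2 * K u)
    (hκ₂fin : Integrable (fun u => u ^ 2 * K u))
    (hF : ∀ x, F x = ∫ t in Set.Iic x, f t)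
    (hfLip : ∀ u v, |f u - f v| ≤ l₀ * |u - v|)
    (hq : F qτ = τk)
    (hint : Integrable (fun u => K u * F (qτ - h * u))) :
    |(∫ u, K u * F (qτ - h * u)) - τk| ≤ l₀ * κ₂ / 2 * h ^ 2 :=
  smoothed_loss_first_deriv_bias_general τk h l₀ κ₂ qτ K f F hKsymm hKnonneg hKint hκ₂ hκ₂fin hF
    hfLip hq hint
end

section
/- Deterministic cone property of the L1-penalized smoothed CQR estimator: Let Q̂ : ℝ^q × ℝ^p → ℝ be convex and differentiable, (α*, β*) a fixed point with ζ* = ∇_α Q̂(α*, β*) and ω* = ∇_β Q̂(α*, β*), and let (α̂, β̂) minimize (α,β) ↦ Q̂(α,β) + λ‖β‖₁. Suppose β* is supported on S and ‖ζ*‖_∞ ≤ 3λ/(2q), ‖ω*‖_∞ ≤ λ/2. Then ‖β̂_{S^c} - β*_{S^c}‖₁ ≤ 3‖β̂_S - β*_S‖₁ + 3 q^{-1/2} ‖α̂ - α*‖₂. -/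
/-!
Convexity of `Q̂` at `θ* = (α*, β*)` bounds `Q̂(θ̂) - Q̂(θ*)` below by `⟨ζ*, Δα⟩ + ⟨ω*, Δβ⟩`, while
minimality of `θ̂` and the support of `β*` bound it above by `λ (‖Δβ_S‖₁ - ‖Δβ_{Sᶜ}‖₁)`.
The gradient bounds and `‖Δα‖₁ ≤ √q ‖Δα‖₂` turn the lower bound into
`-(λ/2) (3 q^{-1/2} ‖Δα‖₂ + ‖Δβ_S‖₁ + ‖Δβ_{Sᶜ}‖₁)`; comparing the two and dividing by `λ/2` gives the cone.
-/

open Finset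

theorem ConvexOn.apply_sub_le_of_hasFDerivAt {E : Type*} [NormedAddCommGroup E]
    [NormedSpace ℝ E] {s : Set E} {f : E → ℝ} {f' : E →L[ℝ] ℝ} {x y : E}
    (hf : ConvexOn ℝ s f) (hx : x ∈ s) (hy : y ∈ s) (hf' : HasFDerivAt f f' x) :
    f' (y - x) ≤ f y - f x := by
  let ℓ : ℝ →ᵃ[ℝ] E := AffineMap.lineMap x y
  have hconv : ConvexOn ℝ (ℓ ⁻¹' s) (f ∘ ℓ) := hf.comp_affineMap ℓ
  have hderiv : HasDerivAt (f ∘ ℓ) (f' (y - x)) 0 := by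
    refine HasFDerivAt.comp_hasDerivAt (0 : ℝ) ?_ AffineMap.hasDerivAt_lineMap
    simpa [ℓ] using hf'
  have h0 : (0 : ℝ) ∈ ℓ ⁻¹' s := by simpa [ℓ] using hx
  have h1 : (1 : ℝ) ∈ ℓ ⁻¹' s := by simpa [ℓ] using hy
  simpa [slope_def_field, ℓ] using hconv.le_slope_of_hasDerivAt h0 h1 one_pos hderiv

theorem abs_sum_mul_le_mul_sum_abs {ι : Type*} {s : Finset ι} {w x : ι → ℝ} {c : ℝ}
    (hw : ∀ i ∈ s, |w i| ≤ c) : |∑ i ∈ s, w i * x i| ≤ c * ∑ i ∈ s, |x i| := by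
  rw [mul_sum]
  refine (abs_sum_le_sum_abs _ _).trans (sum_le_sum fun i hi => ?_)
  rw [abs_mul]
  exact mul_le_mul_of_nonneg_right (hw i hi) (abs_nonneg _)

theorem sum_abs_le_sqrt_card_mul_sqrt_sum_sq {ι : Type*} [Fintype ι] (x : ι → ℝ) :
    ∑ i, |x i| ≤ √(Fintype.card ι) * √(∑ i, x i ^ 2) := by
  rw [← Real.sqrt_mul (Nat.cast_nonneg _), Real.le_sqrt (sum_nonneg fun i _ => abs_nonneg _)
    (by positivity)]
  simpa only [sq_abs, card_univ] using sq_sum_le_card_mul_sum_sq (s := univ) (f := fun i => |x i|)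

theorem sum_abs_sub_sum_abs_le_of_support {ι : Type*} [Fintype ι] [DecidableEq ι]
    {S : Finset ι} {a b : ι → ℝ} (hb : ∀ j ∉ S, b j = 0) :
    ∑ j, |b j| - ∑ j, |a j| ≤ ∑ j ∈ S, |a j - b j| - ∑ j ∈ Sᶜ, |a j - b j| := by
  have hb_off : ∑ j ∈ Sᶜ, |b j| = 0 :=
    sum_eq_zero fun j hj => by rw [hb j (mem_compl.mp hj), abs_zero]
  have ha_off : ∑ j ∈ Sᶜ, |a j - b j| = ∑ j ∈ Sᶜ, |a j| :=
    sum_congr rfl fun j hj => by rw [hb j (mem_compl.mp hj), sub_zero]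
  have hS : ∑ j ∈ S, |b j| - ∑ j ∈ S, |a j| ≤ ∑ j ∈ S, |a j - b j| := by
    rw [← sum_sub_distrib]
    exact sum_le_sum fun j _ => by
      simpa only [abs_sub_comm (b j)] using abs_sub_abs_le_abs_sub (b j) (a j)
  rw [← sum_add_sum_compl S fun j => |b j|, ← sum_add_sum_compl S fun j => |a j|]
  linarith

theorem cone_property_l1_penalized_general
    (q p : ℕ)
    (Qhat : (Fin q → ℝ) × (Fin p → ℝ) → ℝ)
    (hconv : ConvexOn ℝ Set.univ Qhat) (hdiff : Differentiable ℝ Qhat)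
    (αstar : Fin q → ℝ) (βstar : Fin p → ℝ)
    (ζstar : Fin q → ℝ) (ωstar : Fin p → ℝ)
    (hgrad : ∀ (a : Fin q → ℝ) (b : Fin p → ℝ),
      fderiv ℝ Qhat (αstar, βstar) (a, b) =
        (∑ k, ζstar k * a k) + ∑ j, ωstar j * b j)
    (lam : ℝ) (hlam : 0 < lam)
    (S : Finset (Fin p)) (hsupp : ∀ j ∉ S, βstar j = 0)
    (αhat : Fin q → ℝ) (βhat : Fin p → ℝ)
    (hmin : ∀ v : (Fin q → ℝ) × (Fin p → ℝ),
      Qhat (αhat, βhat) + lam * ∑ j, |βhat j| ≤ Qhat v + lam * ∑ j, |v.2 j|)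
    (hζ : ∀ k, |ζstar k| ≤ 3 * lam / (2 * q))
    (hω : ∀ j, |ωstar j| ≤ lam / 2) :
    ∑ j ∈ Sᶜ, |βhat j - βstar j| ≤
      3 * ∑ j ∈ S, |βhat j - βstar j| +
        3 / Real.sqrt q * Real.sqrt (∑ k, (αhat k - αstar k) ^ 2) := by
  set N := √(∑ k, (αhat k - αstar k) ^ 2)
  have hlin : (∑ k, ζstar k * (αhat k - αstar k)) + ∑ j, ωstar j * (βhat j - βstar j) ≤
      Qhat (αhat, βhat) - Qhat (αstar, βstar) := by
    simpa [hgrad] using hconv.apply_sub_le_of_hasFDerivAt (Set.mem_univ (αstar, βstar))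
      (Set.mem_univ (αhat, βhat)) (hdiff _).hasFDerivAt
  have hpen : Qhat (αhat, βhat) - Qhat (αstar, βstar) ≤
      lam * (∑ j ∈ S, |βhat j - βstar j| - ∑ j ∈ Sᶜ, |βhat j - βstar j|) := by
    have := mul_le_mul_of_nonneg_left (sum_abs_sub_sum_abs_le_of_support (a := βhat) hsupp)
      hlam.le
    linarith [hmin (αstar, βstar)]
  have hζsum : |∑ k, ζstar k * (αhat k - αstar k)| ≤ lam / 2 * (3 / √q * N) := by
    refine (abs_sum_mul_le_mul_sum_abs fun k _ => hζ k).trans ?_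
    have hcs := sum_abs_le_sqrt_card_mul_sqrt_sum_sq (αhat - αstar)
    simp only [Fintype.card_fin, Pi.sub_apply] at hcs
    calc 3 * lam / (2 * q) * ∑ k, |αhat k - αstar k|
        ≤ 3 * lam / (2 * q) * (√q * N) := by gcongr
      _ = 3 * lam / 2 * (√q / q) * N := by ring
      _ = lam / 2 * (3 / √q * N) := by rw [Real.sqrt_div_self']; ring
  have hωsum : |∑ j, ωstar j * (βhat j - βstar j)| ≤
      lam / 2 * (∑ j ∈ S, |βhat j - βstar j| + ∑ j ∈ Sᶜ, |βhat j - βstar j|) := by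
    rw [sum_add_sum_compl]
    exact abs_sum_mul_le_mul_sum_abs fun j _ => hω j
  have hcone : lam / 2 * ∑ j ∈ Sᶜ, |βhat j - βstar j| ≤
      lam / 2 * (3 * ∑ j ∈ S, |βhat j - βstar j| + 3 / √q * N) := by
    linarith [neg_abs_le (∑ k, ζstar k * (αhat k - αstar k)),
      neg_abs_le (∑ j, ωstar j * (βhat j - βstar j))]
  exact le_of_mul_le_mul_left hcone (half_pos hlam)

/-- deterministic cone property of the L1-penalized smoothed CQR
estimator: conditioned on ‖ζ*‖_∞ ≤ 3λ/(2q) and ‖ω*‖_∞ ≤ λ/2,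
‖β̂_{Sᶜ} - β*_{Sᶜ}‖₁ ≤ 3‖β̂_S - β*_S‖₁ + 3 q^{-1/2} ‖α̂ - α*‖₂. -/
theorem cone_property_l1_penalized
    (q p : ℕ) (hq : 0 < q)
    (Qhat : (Fin q → ℝ) × (Fin p → ℝ) → ℝ)
    (hconv : ConvexOn ℝ Set.univ Qhat) (hdiff : Differentiable ℝ Qhat)
    (αstar : Fin q → ℝ) (βstar : Fin p → ℝ)
    (ζstar : Fin q → ℝ) (ωstar : Fin p → ℝ)
    (hgrad : ∀ (a : Fin q → ℝ) (b : Fin p → ℝ),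
      fderiv ℝ Qhat (αstar, βstar) (a, b) =
        (∑ k, ζstar k * a k) + ∑ j, ωstar j * b j)
    (lam : ℝ) (hlam : 0 < lam)
    (S : Finset (Fin p)) (hsupp : ∀ j ∉ S, βstar j = 0)
    (αhat : Fin q → ℝ) (βhat : Fin p → ℝ)
    (hmin : ∀ v : (Fin q → ℝ) × (Fin p → ℝ),
      Qhat (αhat, βhat) + lam * ∑ j, |βhat j| ≤ Qhat v + lam * ∑ j, |v.2 j|)
    (hζ : ∀ k, |ζstar k| ≤ 3 * lam / (2 * q))
    (hω : ∀ j, |ωstar j| ≤ lam / 2) :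
    ∑ j ∈ Sᶜ, |βhat j - βstar j| ≤
      3 * ∑ j ∈ S, |βhat j - βstar j| +
        3 / Real.sqrt q * Real.sqrt (∑ k, (αhat k - αstar k) ^ 2) :=
  cone_property_l1_penalized_general q p Qhat hconv hdiff αstar βstar ζstar ωstar hgrad lam hlam S
    hsupp αhat βhat hmin hζ hω
end

section
/- Intermediate inequality for the cone property: under the same setup, (λ - ‖ω*‖_∞)·‖β̂_{S^c} - β*_{S^c}‖₁ ≤ (λ + ‖ω*‖_∞)·‖β̂_S - β*_S‖₁ + ‖ζ*‖_∞·‖α̂ - α*‖₁. -/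
/-!
Convexity gives `Q̂(α*, β*) + ⟨ζ*, α̂ - α*⟩ + ⟨ω*, β̂ - β*⟩ ≤ Q̂(α̂, β̂)`, and optimality of
`(α̂, β̂)` compared with `(α*, β*)` then bounds
`λ (‖β̂‖₁ - ‖β*‖₁) ≤ -⟨ζ*, α̂ - α*⟩ - ⟨ω*, β̂ - β*⟩ ≤ ‖ζ*‖_∞ ‖α̂ - α*‖₁ + ‖ω*‖_∞ ‖β̂ - β*‖₁`.
Since `β*` vanishes off `S`, the triangle inequality gives
`‖β̂‖₁ - ‖β*‖₁ ≥ ‖(β̂ - β*)_{Sᶜ}‖₁ - ‖(β̂ - β*)_S‖₁`; splitting `‖β̂ - β*‖₁` over `S` and `Sᶜ`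
and rearranging yields the claim.
-/

open Finset

theorem ConvexOn.add_fderiv_sub_le {E : Type*} [NormedAddCommGroup E] [NormedSpace ℝ E]
    {s : Set E} {f : E → ℝ} (hf : ConvexOn ℝ s f) {x y : E} (hx : x ∈ s) (hy : y ∈ s)
    (hfx : DifferentiableAt ℝ f x) :
    f x + fderiv ℝ f x (y - x) ≤ f y := by
  set g : ℝ →ᵃ[ℝ] E := AffineMap.lineMap x y
  have hg_conv : ConvexOn ℝ (Set.Icc 0 1) (f ∘ g) :=
    (hf.comp_affineMap g).subset (hf.1.mapsTo_lineMap hx hy) (convex_Icc 0 1)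
  have hg_deriv : HasDerivAt (f ∘ g) (fderiv ℝ f x (y - x)) 0 := by
    have hfx' : HasFDerivAt f (fderiv ℝ f x) (g 0) := by
      simpa [g] using hfx.hasFDerivAt
    exact hfx'.comp_hasDerivAt 0 AffineMap.hasDerivAt_lineMap
  have hslope := hg_conv.le_slope_of_hasDerivAt (by simp) (by simp) one_pos hg_deriv
  simp only [slope_def_field, Function.comp_apply, g, AffineMap.lineMap_apply_one,
    AffineMap.lineMap_apply_zero, sub_zero, div_one] at hslope
  linarith

theorem abs_sum_mul_le_norm_mul_sum_abs {ι : Type*} [Fintype ι] (v w : ι → ℝ) :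
    |∑ i, v i * w i| ≤ ‖v‖ * ∑ i, |w i| := by
  calc |∑ i, v i * w i| ≤ ∑ i, |v i| * |w i| := by
        simpa only [abs_mul] using abs_sum_le_sum_abs (fun i => v i * w i) univ
    _ ≤ ∑ i, ‖v‖ * |w i| := by
        gcongr with i
        simpa only [Real.norm_eq_abs] using norm_le_pi_norm v i
    _ = ‖v‖ * ∑ i, |w i| := (mul_sum _ _ _).symm

theorem sum_compl_abs_sub_sub_sum_abs_sub_le {ι : Type*} [Fintype ι] [DecidableEq ι]
    {S : Finset ι} {b c : ι → ℝ} (hc : ∀ j ∉ S, c j = 0) :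
    ∑ j ∈ Sᶜ, |b j - c j| - ∑ j ∈ S, |b j - c j| ≤ ∑ j, |b j| - ∑ j, |c j| := by
  have hc_compl : ∑ j ∈ Sᶜ, |c j| = 0 :=
    sum_eq_zero fun j hj => by rw [hc j (mem_compl.mp hj), abs_zero]
  have hsub_compl : ∑ j ∈ Sᶜ, |b j - c j| = ∑ j ∈ Sᶜ, |b j| :=
    sum_congr rfl fun j hj => by rw [hc j (mem_compl.mp hj), sub_zero]
  have htriangle : ∑ j ∈ S, |c j| ≤ ∑ j ∈ S, |b j| + ∑ j ∈ S, |b j - c j| := by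
    rw [← sum_add_distrib]
    exact sum_le_sum fun j _ => by
      linarith [abs_sub_abs_le_abs_sub (c j) (b j), abs_sub_comm (c j) (b j)]
  rw [← sum_add_sum_compl S (fun j => |b j|), ← sum_add_sum_compl S (fun j => |c j|)]
  linarith

theorem cone_property_intermediate_general
    (q p : ℕ)
    (Qhat : (Fin q → ℝ) × (Fin p → ℝ) → ℝ)
    (hconv : ConvexOn ℝ Set.univ Qhat) (hdiff : Differentiable ℝ Qhat)
    (αstar : Fin q → ℝ) (βstar : Fin p → ℝ)
    (ζstar : Fin q → ℝ) (ωstar : Fin p → ℝ)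
    (hgrad : ∀ (a : Fin q → ℝ) (b : Fin p → ℝ),
      fderiv ℝ Qhat (αstar, βstar) (a, b) =
        (∑ k, ζstar k * a k) + ∑ j, ωstar j * b j)
    (lam : ℝ) (hlam : 0 < lam)
    (S : Finset (Fin p)) (hsupp : ∀ j ∉ S, βstar j = 0)
    (αhat : Fin q → ℝ) (βhat : Fin p → ℝ)
    (hmin : ∀ v : (Fin q → ℝ) × (Fin p → ℝ),
      Qhat (αhat, βhat) + lam * ∑ j, |βhat j| ≤ Qhat v + lam * ∑ j, |v.2 j|) :
    (lam - ‖ωstar‖) * ∑ j ∈ Sᶜ, |βhat j - βstar j| ≤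
      (lam + ‖ωstar‖) * ∑ j ∈ S, |βhat j - βstar j| +
        ‖ζstar‖ * ∑ k, |αhat k - αstar k| := by
  have hsupport := hconv.add_fderiv_sub_le (Set.mem_univ (αstar, βstar))
    (Set.mem_univ (αhat, βhat)) (hdiff _)
  rw [Prod.mk_sub_mk, hgrad] at hsupport
  have hoptimal := hmin (αstar, βstar)
  dsimp only at hoptimal
  have hζ := neg_le_of_abs_le (abs_sum_mul_le_norm_mul_sum_abs ζstar (αhat - αstar))
  have hω := neg_le_of_abs_le (abs_sum_mul_le_norm_mul_sum_abs ωstar (βhat - βstar))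
  simp only [Pi.sub_apply] at hsupport hζ hω
  rw [← sum_add_sum_compl S] at hω
  have hl1 := mul_le_mul_of_nonneg_left
    (sum_compl_abs_sub_sub_sum_abs_sub_le (b := βhat) hsupp) hlam.le
  linarith

/-- intermediate inequality for the cone property:
(λ - ‖ω*‖_∞)‖β̂_{Sᶜ} - β*_{Sᶜ}‖₁ ≤ (λ + ‖ω*‖_∞)‖β̂_S - β*_S‖₁ + ‖ζ*‖_∞‖α̂ - α*‖₁.
Here the norm on `Fin q → ℝ` / `Fin p → ℝ` is the sup norm. -/
theorem cone_property_intermediate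
    (q p : ℕ) (hq : 0 < q)
    (Qhat : (Fin q → ℝ) × (Fin p → ℝ) → ℝ)
    (hconv : ConvexOn ℝ Set.univ Qhat) (hdiff : Differentiable ℝ Qhat)
    (αstar : Fin q → ℝ) (βstar : Fin p → ℝ)
    (ζstar : Fin q → ℝ) (ωstar : Fin p → ℝ)
    (hgrad : ∀ (a : Fin q → ℝ) (b : Fin p → ℝ),
      fderiv ℝ Qhat (αstar, βstar) (a, b) =
        (∑ k, ζstar k * a k) + ∑ j, ωstar j * b j)
    (lam : ℝ) (hlam : 0 < lam)
    (S : Finset (Fin p)) (hsupp : ∀ j ∉ S, βstar j = 0)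
    (αhat : Fin q → ℝ) (βhat : Fin p → ℝ)
    (hmin : ∀ v : (Fin q → ℝ) × (Fin p → ℝ),
      Qhat (αhat, βhat) + lam * ∑ j, |βhat j| ≤ Qhat v + lam * ∑ j, |v.2 j|) :
    (lam - ‖ωstar‖) * ∑ j ∈ Sᶜ, |βhat j - βstar j| ≤
      (lam + ‖ωstar‖) * ∑ j ∈ S, |βhat j - βstar j| +
        ‖ζstar‖ * ∑ k, |αhat k - αstar k| :=
  cone_property_intermediate_general q p Qhat hconv hdiff αstar βstar ζstar ωstar hgrad lam hlam S
    hsupp αhat βhat hmin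
end
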